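/- Latin hypercube sampling in [0,1)^d is pairwise negatively dependent: for any anchored boxes Q = ∏_i [q^{(i)},1) and R = ∏_i [r^{(i)},1), P(p_1 ∈ Q, p_2 ∈ R) ≤ ∏_i (1-q^{(i)})(1-r^{(i)}) = P(p_1 ∈ Q)·P(p_2 ∈ R). -/

import Mathlib

open MeasureTheory ProbabilityTheory

noncomputable instance (n : ℕ) : MeasurableSpace (Equiv.Perm (Fin n)) := ⊤

/-- The uniform probability measure on a finite type. -/
noncomputable def unif (α : Type*) [Fintype α] [MeasurableSpace α] : Measure α :=
  (Fintype.card α : ENNReal)⁻¹ • Measure.count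

/-- Sample space of Latin hypercube sampling: independent uniform permutations `π_1,…,π_d`
and i.i.d. uniforms `U_j^{(i)}`. -/
def LHSSpace (N d : ℕ) : Type :=
  (Fin d → Equiv.Perm (Fin N)) × (Fin N → Fin d → ℝ)

noncomputable instance (N d : ℕ) : MeasurableSpace (LHSSpace N d) :=
  inferInstanceAs (MeasurableSpace ((Fin d → Equiv.Perm (Fin N)) × (Fin N → Fin d → ℝ)))

/-- The distribution of the randomizations of Latin hypercube sampling. -/
noncomputable def lhsMeasure (N d : ℕ) : Measure (LHSSpace N d) :=
  (Measure.pi fun _ : Fin d => unif (Equiv.Perm (Fin N))).prod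
    (Measure.pi fun _ : Fin N => Measure.pi fun _ : Fin d =>
      volume.restrict (Set.Ico (0 : ℝ) 1))

/-- The `i`-th coordinate of the `j`-th point of Latin hypercube sampling:
`p_j^{(i)} = (π_i(j) - U_j^{(i)})/N`. -/
noncomputable def lhsPoint (N d : ℕ) (j : Fin N) (i : Fin d) (ω : LHSSpace N d) : ℝ :=
  (((ω.1 i j : ℕ) + 1 : ℝ) - ω.2 j i) / N

section RealLemmas
open Finset

noncomputable def fcl (k : ℕ) (x : ℝ) : ℝ := min 1 (max 0 ((k:ℝ) + 1 - x))

lemma fcl_nonneg (k : ℕ) (x : ℝ) : 0 ≤ fcl k x := le_min one_pos.le (le_max_left _ _)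

lemma fcl_mono {k k' : ℕ} (h : k ≤ k') (x : ℝ) : fcl k x ≤ fcl k' x := by
  unfold fcl
  have : (k:ℝ) ≤ k' := Nat.cast_le.2 h
  exact min_le_min le_rfl (max_le_max le_rfl (by linarith))

lemma sum_range_fcl (N : ℕ) (x : ℝ) (h0 : 0 ≤ x) (h1 : x ≤ N) :
    ∑ k ∈ range N, fcl k x = N - x := by
  induction N with
  | zero => simp at h1 ⊢; linarith [le_antisymm h1 h0]
  | succ n ih =>
    rw [Finset.sum_range_succ]
    rcases le_or_gt x n with h | h
    · rw [ih h]
      have : fcl n x = 1 := by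
        unfold fcl
        rw [max_eq_right (by linarith), min_eq_left (by linarith)]
      rw [this]; push_cast; ring
    · have hz : ∀ k ∈ range n, fcl k x = 0 := by
        intro k hk
        have hk' : (k:ℝ) + 1 ≤ n := by
          have := Finset.mem_range.1 hk
          have : (k:ℝ) + 1 ≤ (n:ℝ) := by exact_mod_cast this
          linarith
        unfold fcl
        rw [max_eq_left (by linarith), min_eq_right (by linarith)]
      rw [Finset.sum_eq_zero hz]
      have : fcl n x = (n:ℝ) + 1 - x := by
        unfold fcl
        push_cast at h1
        rw [max_eq_right (by linarith), min_eq_right (by linarith)]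
      rw [this]; push_cast; ring

open Equiv

lemma perm_sum_apply_zero (m : ℕ) (G : Fin (m+1) → ℝ) :
    ∑ e : Equiv.Perm (Fin (m+1)), G (e 0) = m.factorial * ∑ p, G p := by
  rw [← Equiv.sum_comp Equiv.Perm.decomposeFin.symm (fun e : Equiv.Perm (Fin (m+1)) => G (e 0)),
    Fintype.sum_prod_type]
  simp only [Equiv.Perm.decomposeFin_symm_apply_zero]
  simp [Finset.sum_const, Fintype.card_perm, Fintype.card_fin, mul_comm, Finset.mul_sum]

lemma perm_sum_pair (n : ℕ) (h : Fin (n+2) → Fin (n+2) → ℝ) :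
    ∑ π : Equiv.Perm (Fin (n+2)), h (π 0) (π 1)
      = n.factorial * ∑ p, (∑ k, h p k - h p p) := by
  rw [← Equiv.sum_comp Equiv.Perm.decomposeFin.symm
    (fun π : Equiv.Perm (Fin (n+2)) => h (π 0) (π 1)), Fintype.sum_prod_type]
  simp only [Equiv.Perm.decomposeFin_symm_apply_zero, Equiv.Perm.decomposeFin_symm_apply_one]
  rw [Finset.mul_sum]
  refine Finset.sum_congr rfl fun p _ => ?_
  rw [perm_sum_apply_zero n (fun p' => h p (Equiv.swap 0 p p'.succ))]
  congr 1
  have h2 : ∑ k : Fin (n+2), h p (Equiv.swap 0 p k)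
      = h p (Equiv.swap 0 p 0) + ∑ p' : Fin (n+1), h p (Equiv.swap 0 p p'.succ) :=
    Fin.sum_univ_succ _
  rw [Equiv.sum_comp (Equiv.swap 0 p) (fun k => h p k), Equiv.swap_apply_left] at h2
  linarith

lemma perm_sum_index {N : ℕ} (j j' : Fin N) (G : Fin N → ℝ) :
    ∑ π : Equiv.Perm (Fin N), G (π j) = ∑ π : Equiv.Perm (Fin N), G (π j') := by
  rw [← Equiv.sum_comp (Equiv.mulRight (Equiv.swap j j'))
    (fun π : Equiv.Perm (Fin N) => G (π j))]
  simp [Equiv.Perm.mul_apply, Equiv.swap_apply_left]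

lemma sum_fin_fcl (n : ℕ) (q : ℝ) (hq : q ∈ Set.Ico (0:ℝ) 1) :
    ∑ p : Fin (n+2), fcl p.val ((n+2) * q) = (n+2) * (1 - q) := by
  rw [Fin.sum_univ_eq_sum_range (fun k => fcl k ((n+2) * q))]
  have h1 : (0:ℝ) ≤ ((n:ℝ)+2) * q := mul_nonneg (by positivity) hq.1
  have h2 : ((n:ℝ)+2) * q ≤ ((n+2:ℕ):ℝ) := by push_cast; nlinarith [hq.2, hq.1]
  rw [sum_range_fcl (n+2) (((n:ℝ)+2)*q) h1 h2]
  push_cast; ring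

lemma key_single (n : ℕ) (j : Fin (n+2)) (q : ℝ) (hq : q ∈ Set.Ico (0:ℝ) 1) :
    ∑ π : Equiv.Perm (Fin (n+2)), fcl (π j).val ((n+2) * q)
      = (n+2).factorial * (1 - q) := by
  rw [perm_sum_index j 0 (fun p => fcl p.val ((n+2) * q)), perm_sum_apply_zero (n+1) (fun p => fcl p.val ((n+2) * q)),
    sum_fin_fcl n q hq]
  rw [show (n+2).factorial = (n+2) * (n+1).factorial from rfl]
  push_cast; ring

lemma key_pair (n : ℕ) (q r : ℝ) (hq : q ∈ Set.Ico (0:ℝ) 1) (hr : r ∈ Set.Ico (0:ℝ) 1) :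
    ∑ π : Equiv.Perm (Fin (n+2)), fcl (π 0).val ((n+2) * q) * fcl (π 1).val ((n+2) * r)
      ≤ (n+2).factorial * ((1 - q) * (1 - r)) := by
  set x : ℝ := (n+2) * q with hx
  set y : ℝ := (n+2) * r with hy
  rw [perm_sum_pair n (fun p k => fcl p.val x * fcl k.val y)]
  have hmono : Monovary (fun p : Fin (n+2) => fcl p.val x) (fun p : Fin (n+2) => fcl p.val y) := by
    intro i j hij
    rcases le_or_gt i j with h | h
    · exact fcl_mono (Fin.le_def.1 h) x
    · exact absurd hij (not_lt.2 (fcl_mono (Fin.le_def.1 h.le) y))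
  have hcheb := hmono.sum_mul_sum_le_card_mul_sum
  rw [Fintype.card_fin] at hcheb
  push_cast at hcheb
  have hSx : ∑ p : Fin (n+2), fcl p.val x = (n+2) * (1 - q) := sum_fin_fcl n q hq
  have hSy : ∑ p : Fin (n+2), fcl p.val y = (n+2) * (1 - r) := sum_fin_fcl n r hr
  have hsum : ∑ p : Fin (n+2), (∑ k : Fin (n+2), fcl p.val x * fcl k.val y
      - fcl p.val x * fcl p.val y)
      = ((n+2) * (1 - q)) * ((n+2) * (1 - r)) - ∑ p : Fin (n+2), fcl p.val x * fcl p.val y := by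
    rw [Finset.sum_sub_distrib, ← Finset.sum_mul_sum, hSx, hSy]
  rw [hsum]
  rw [hSx, hSy] at hcheb
  have hM : (0:ℝ) < (n:ℝ) + 2 := by positivity
  have hc : ((n:ℝ)+2) * (1-q) * (1-r) ≤ ∑ p : Fin (n+2), fcl p.val x * fcl p.val y := by
    rw [← mul_le_mul_iff_right₀ hM]
    calc ((n:ℝ)+2) * (((n:ℝ)+2) * (1-q) * (1-r)) = (((n:ℝ)+2) * (1 - q)) * (((n:ℝ)+2) * (1 - r)) := by
          ring
      _ ≤ ((n:ℝ)+2) * ∑ p : Fin (n+2), fcl p.val x * fcl p.val y := hcheb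
  have hfact : ((n+2).factorial : ℝ) = ((n:ℝ)+2) * ((n:ℝ)+1) * (n.factorial : ℝ) := by
    rw [show (n+2).factorial = (n+2) * ((n+1) * n.factorial) from rfl]
    push_cast; ring
  rw [hfact]
  have hnf : (0:ℝ) ≤ (n.factorial : ℝ) := Nat.cast_nonneg _
  have hAB : (0:ℝ) ≤ (1-q) * (1-r) := mul_nonneg (by linarith [hq.2]) (by linarith [hr.2])
  calc (n.factorial:ℝ) * ((((n:ℝ)+2) * (1 - q)) * ((((n:ℝ)+2)) * (1 - r))
        - ∑ p : Fin (n+2), fcl p.val x * fcl p.val y)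
      ≤ (n.factorial:ℝ) * ((((n:ℝ)+2) * (1-q)) * ((((n:ℝ)+2)) * (1-r))
        - ((n:ℝ)+2) * (1-q) * (1-r)) := by
        apply mul_le_mul_of_nonneg_left _ hnf
        push_cast
        linarith [hc]
    _ = ((n:ℝ)+2) * ((n:ℝ)+1) * (n.factorial:ℝ) * ((1-q)*(1-r)) := by ring
end RealLemmas

section MeasureLemmas

open MeasureTheory Finset

instance permMSC (n : ℕ) : MeasurableSingletonClass (Equiv.Perm (Fin n)) :=
  ⟨fun _ => MeasurableSpace.measurableSet_top⟩

lemma unif_singleton {α : Type*} [Fintype α] [MeasurableSpace α] [MeasurableSingletonClass α]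
    (a : α) : unif α {a} = (Fintype.card α : ENNReal)⁻¹ := by
  simp [unif, Measure.count_singleton]

instance unif_prob (n : ℕ) : IsProbabilityMeasure (unif (Equiv.Perm (Fin n))) := by
  constructor
  rw [unif, Measure.smul_apply, Measure.count_univ, smul_eq_mul]
  rw [ENat.card_eq_coe_fintype_card, ENat.toENNReal_coe]
  exact ENNReal.inv_mul_cancel (by exact_mod_cast (Fintype.card_ne_zero (α := Equiv.Perm (Fin n)))) (ENNReal.natCast_ne_top _)

instance ico_prob : IsProbabilityMeasure (volume.restrict (Set.Ico (0:ℝ) 1)) := by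
  constructor
  rw [Measure.restrict_apply_univ, Real.volume_Ico]
  norm_num

lemma pi_unif (d N : ℕ) :
    Measure.pi (fun _ : Fin d => unif (Equiv.Perm (Fin N)))
      = unif (Fin d → Equiv.Perm (Fin N)) := by
  apply MeasureTheory.Measure.ext_of_singleton
  intro a
  rw [unif_singleton a, ← Set.univ_pi_singleton a, Measure.pi_pi]
  simp only [unif_singleton]
  rw [Finset.prod_const, Fintype.card_pi, Finset.prod_const]
  rw [Finset.card_univ, Fintype.card_fin, Nat.cast_pow, ← ENNReal.inv_pow]

lemma lintegral_unif {α : Type*} [Fintype α] [MeasurableSpace α] [MeasurableSingletonClass α]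
    (f : α → ENNReal) :
    ∫⁻ x, f x ∂(unif α) = (Fintype.card α : ENNReal)⁻¹ * ∑ x, f x := by
  rw [unif, lintegral_smul_measure, lintegral_count, tsum_fintype, smul_eq_mul]

lemma slice_measure (N k : ℕ) (hk : k < N) (q : ℝ) (hq : q ∈ Set.Ico (0:ℝ) 1) :
    volume.restrict (Set.Ico (0:ℝ) 1) {u : ℝ | ((k:ℝ) + 1 - u)/(N:ℝ) ∈ Set.Ico q 1}
      = ENNReal.ofReal (fcl k ((N:ℝ)*q)) := by
  have hN : (0:ℝ) < N := by exact_mod_cast (Nat.zero_le k).trans_lt hk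
  set b : ℝ := (k:ℝ) + 1 - N*q with hb
  have hset : {u : ℝ | ((k:ℝ)+1-u)/(N:ℝ) ∈ Set.Ico q 1} = Set.Ioc ((k:ℝ)+1-N) b := by
    ext u
    simp only [Set.mem_setOf_eq, Set.mem_Ico, Set.mem_Ioc, le_div_iff₀ hN, div_lt_one hN, hb]
    constructor <;> intro h <;> constructor <;> nlinarith [h.1, h.2]
  have hkN : (k:ℝ) + 1 - N ≤ 0 := by
    have : (k:ℝ) + 1 ≤ N := by exact_mod_cast Nat.succ_le_of_lt hk
    linarith
  rw [hset, Measure.restrict_apply measurableSet_Ioc]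
  have key : ENNReal.ofReal (min b 1) = ENNReal.ofReal (fcl k ((N:ℝ)*q)) := by
    unfold fcl
    rcases le_or_gt 0 b with h | h
    · rw [max_eq_right (by exact h), min_comm]
    · rw [min_eq_left (by linarith), ENNReal.ofReal_of_nonpos h.le,
        max_eq_left (by have := h.le; exact this), min_eq_right zero_le_one, ENNReal.ofReal_zero]
  refine le_antisymm ?_ ?_
  · calc volume (Set.Ioc ((k:ℝ)+1-N) b ∩ Set.Ico 0 1)
        ≤ volume (Set.Icc 0 (min b 1)) := by
          apply measure_mono
          rintro u ⟨⟨_, hub⟩, ⟨hu0, hu1⟩⟩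
          exact ⟨hu0, le_min hub hu1.le⟩
      _ = ENNReal.ofReal (min b 1 - 0) := Real.volume_Icc
      _ = _ := by rw [sub_zero, key]
  · calc ENNReal.ofReal (fcl k ((N:ℝ)*q)) = ENNReal.ofReal (min b 1 - 0) := by
          rw [sub_zero, key]
      _ = volume (Set.Ioo 0 (min b 1)) := (Real.volume_Ioo).symm
      _ ≤ volume (Set.Ioc ((k:ℝ)+1-N) b ∩ Set.Ico 0 1) := by
          apply measure_mono
          rintro u ⟨hu0, hum⟩
          exact ⟨⟨lt_of_le_of_lt hkN hu0, (le_of_lt hum).trans (min_le_left _ _)⟩,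
            ⟨hu0.le, lt_of_lt_of_le hum (min_le_right _ _)⟩⟩

lemma measurable_lhsPoint (N d : ℕ) (j : Fin N) (i : Fin d) : Measurable (lhsPoint N d j i) := by
  unfold lhsPoint
  apply Measurable.div_const
  apply Measurable.sub
  · exact (measurable_from_top (f := fun π : Equiv.Perm (Fin N) => (((π j : ℕ) : ℝ) + 1))).comp
      ((measurable_pi_apply i).comp measurable_fst)
  · exact (measurable_pi_apply i).comp ((measurable_pi_apply j).comp measurable_snd)

lemma meas_event (N d : ℕ) (j : Fin N) (v : Fin d → ℝ) :
    MeasurableSet {ω : LHSSpace N d | ∀ i, lhsPoint N d j i ω ∈ Set.Ico (v i) 1} := by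
  rw [Set.setOf_forall]
  exact MeasurableSet.iInter fun i => (measurable_lhsPoint N d j i) measurableSet_Ico

end MeasureLemmas
section Main
open MeasureTheory Finset

lemma measure_pair (N d : ℕ) (j0 j1 : Fin N) (hj : j0 ≠ j1)
    (q r : Fin d → ℝ) (hq : ∀ i, q i ∈ Set.Ico (0:ℝ) 1) (hr : ∀ i, r i ∈ Set.Ico (0:ℝ) 1) :
    lhsMeasure N d {ω | (∀ i, lhsPoint N d j0 i ω ∈ Set.Ico (q i) 1) ∧
        (∀ i, lhsPoint N d j1 i ω ∈ Set.Ico (r i) 1)}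
      = ∏ i, ((N.factorial : ENNReal)⁻¹ *
          ∑ π : Equiv.Perm (Fin N), (ENNReal.ofReal (fcl ((π j0 : ℕ)) ((N:ℝ) * q i)) *
            ENNReal.ofReal (fcl ((π j1 : ℕ)) ((N:ℝ) * r i)))) := by
  have hE : MeasurableSet {ω : LHSSpace N d | (∀ i, lhsPoint N d j0 i ω ∈ Set.Ico (q i) 1) ∧
      (∀ i, lhsPoint N d j1 i ω ∈ Set.Ico (r i) 1)} := by
    rw [Set.setOf_and]
    exact (meas_event N d j0 q).inter (meas_event N d j1 r)
  rw [lhsMeasure]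
  erw [Measure.prod_apply hE]
  have hslice : ∀ a : Fin d → Equiv.Perm (Fin N),
      (Measure.pi fun _ : Fin N => Measure.pi fun _ : Fin d =>
        volume.restrict (Set.Ico (0 : ℝ) 1))
        (Prod.mk a ⁻¹' {ω : LHSSpace N d | (∀ i, lhsPoint N d j0 i ω ∈ Set.Ico (q i) 1) ∧
          (∀ i, lhsPoint N d j1 i ω ∈ Set.Ico (r i) 1)})
      = (∏ i, ENNReal.ofReal (fcl ((a i j0 : ℕ)) ((N:ℝ) * q i))) *
        (∏ i, ENNReal.ofReal (fcl ((a i j1 : ℕ)) ((N:ℝ) * r i))) := by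
    intro a
    set A : Set (Fin d → ℝ) := Set.univ.pi fun i =>
      {u : ℝ | (((a i j0 : ℕ) : ℝ) + 1 - u) / (N:ℝ) ∈ Set.Ico (q i) 1} with hA
    set B : Set (Fin d → ℝ) := Set.univ.pi fun i =>
      {u : ℝ | (((a i j1 : ℕ) : ℝ) + 1 - u) / (N:ℝ) ∈ Set.Ico (r i) 1} with hB
    have hpre : (Prod.mk a ⁻¹' {ω : LHSSpace N d | (∀ i, lhsPoint N d j0 i ω ∈ Set.Ico (q i) 1) ∧
          (∀ i, lhsPoint N d j1 i ω ∈ Set.Ico (r i) 1)})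
        = Set.univ.pi (fun j => if j = j0 then A else if j = j1 then B else Set.univ) := by
      ext b
      simp only [Set.mem_preimage, Set.mem_setOf_eq, Set.mem_pi, Set.mem_univ, true_implies,
        lhsPoint]
      constructor
      · rintro ⟨h0, h1⟩ j
        by_cases e0 : j = j0
        · subst e0
          rw [if_pos rfl, hA, Set.mem_pi]
          exact fun i _ => h0 i
        · by_cases e1 : j = j1
          · subst e1
            rw [if_neg e0, if_pos rfl, hB, Set.mem_pi]
            exact fun i _ => h1 i
          · rw [if_neg e0, if_neg e1]
            trivial
      · intro h
        constructor
        · have h0 := h j0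
          rw [if_pos rfl, hA, Set.mem_pi] at h0
          exact fun i => h0 i (Set.mem_univ i)
        · have h1 := h j1
          rw [if_neg (Ne.symm hj), if_pos rfl, hB, Set.mem_pi] at h1
          exact fun i => h1 i (Set.mem_univ i)
    rw [hpre, Measure.pi_pi]
    have hone : ∀ j ∈ Finset.univ, j ∉ ({j0, j1} : Finset (Fin N)) →
        (Measure.pi fun _ : Fin d => volume.restrict (Set.Ico (0:ℝ) 1))
          ((fun j => if j = j0 then A else if j = j1 then B else Set.univ) j) = 1 := by
      intro j _ hj2
      simp only [Finset.mem_insert, Finset.mem_singleton] at hj2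
      push_neg at hj2
      simp only [if_neg hj2.1, if_neg hj2.2]
      exact measure_univ
    rw [← Finset.prod_subset (Finset.subset_univ ({j0, j1} : Finset (Fin N))) hone,
      Finset.prod_pair hj]
    have e0 : (fun j => if j = j0 then A else if j = j1 then B else Set.univ) j0 = A := by
      simp only []
      exact if_pos trivial
    have e1 : (fun j => if j = j0 then A else if j = j1 then B else Set.univ) j1 = B := by
      simp only []
      rw [if_neg (Ne.symm hj)]
      exact if_pos trivial
    rw [e0, e1, hA, hB, Measure.pi_pi, Measure.pi_pi]
    congr 1
    · exact Finset.prod_congr rfl fun i _ =>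
        slice_measure N ((a i j0 : ℕ)) (a i j0).isLt (q i) (hq i)
    · exact Finset.prod_congr rfl fun i _ =>
        slice_measure N ((a i j1 : ℕ)) (a i j1).isLt (r i) (hr i)
  erw [lintegral_congr (fun a => hslice a)]
  rw [pi_unif d N, lintegral_unif]
  simp only [← Finset.prod_mul_distrib]
  rw [← Fintype.piFinset_univ,
    ← Finset.prod_univ_sum (fun _ : Fin d => (Finset.univ : Finset (Equiv.Perm (Fin N))))
      (fun i π => ENNReal.ofReal (fcl ((π j0 : ℕ)) ((N:ℝ) * q i)) *
        ENNReal.ofReal (fcl ((π j1 : ℕ)) ((N:ℝ) * r i)))]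
  have hcard : ((Fintype.card (Fin d → Equiv.Perm (Fin N)) : ENNReal))⁻¹
      = ∏ _i : Fin d, (N.factorial : ENNReal)⁻¹ := by
    rw [Fintype.card_pi, Finset.prod_const, Finset.card_univ, Fintype.card_fin,
      Fintype.card_perm, Fintype.card_fin, Nat.cast_pow, ENNReal.inv_pow,
      Finset.prod_const, Finset.card_univ, Fintype.card_fin]
  rw [hcard, ← Finset.prod_mul_distrib]

lemma measure_single (N d : ℕ) (j0 : Fin N)
    (q : Fin d → ℝ) (hq : ∀ i, q i ∈ Set.Ico (0:ℝ) 1) :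
    lhsMeasure N d {ω | ∀ i, lhsPoint N d j0 i ω ∈ Set.Ico (q i) 1}
      = ∏ i, ((N.factorial : ENNReal)⁻¹ *
          ∑ π : Equiv.Perm (Fin N), ENNReal.ofReal (fcl ((π j0 : ℕ)) ((N:ℝ) * q i))) := by
  have hE := meas_event N d j0 q
  rw [lhsMeasure]
  erw [Measure.prod_apply hE]
  have hslice : ∀ a : Fin d → Equiv.Perm (Fin N),
      (Measure.pi fun _ : Fin N => Measure.pi fun _ : Fin d =>
        volume.restrict (Set.Ico (0 : ℝ) 1))
        (Prod.mk a ⁻¹' {ω : LHSSpace N d | ∀ i, lhsPoint N d j0 i ω ∈ Set.Ico (q i) 1})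
      = ∏ i, ENNReal.ofReal (fcl ((a i j0 : ℕ)) ((N:ℝ) * q i)) := by
    intro a
    set A : Set (Fin d → ℝ) := Set.univ.pi fun i =>
      {u : ℝ | (((a i j0 : ℕ) : ℝ) + 1 - u) / (N:ℝ) ∈ Set.Ico (q i) 1} with hA
    have hpre : (Prod.mk a ⁻¹' {ω : LHSSpace N d | ∀ i, lhsPoint N d j0 i ω ∈ Set.Ico (q i) 1})
        = Set.univ.pi (fun j => if j = j0 then A else Set.univ) := by
      ext b
      simp only [Set.mem_preimage, Set.mem_setOf_eq, Set.mem_pi, Set.mem_univ, true_implies,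
        lhsPoint]
      constructor
      · intro h0 j
        by_cases e0 : j = j0
        · subst e0
          rw [if_pos rfl, hA, Set.mem_pi]
          exact fun i _ => h0 i
        · rw [if_neg e0]
          trivial
      · intro h
        have h0 := h j0
        rw [if_pos rfl, hA, Set.mem_pi] at h0
        exact fun i => h0 i (Set.mem_univ i)
    rw [hpre, Measure.pi_pi]
    have hone : ∀ j ∈ Finset.univ, j ∉ ({j0} : Finset (Fin N)) →
        (Measure.pi fun _ : Fin d => volume.restrict (Set.Ico (0:ℝ) 1))
          ((fun j => if j = j0 then A else Set.univ) j) = 1 := by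
      intro j _ hj2
      simp only [Finset.mem_singleton] at hj2
      simp only [if_neg hj2]
      exact measure_univ
    rw [← Finset.prod_subset (Finset.subset_univ ({j0} : Finset (Fin N))) hone,
      Finset.prod_singleton]
    have e0 : (fun j => if j = j0 then A else Set.univ) j0 = A := by
      simp only []
      exact if_pos trivial
    rw [e0, hA, Measure.pi_pi]
    exact Finset.prod_congr rfl fun i _ =>
      slice_measure N ((a i j0 : ℕ)) (a i j0).isLt (q i) (hq i)
  erw [lintegral_congr (fun a => hslice a)]
  rw [pi_unif d N, lintegral_unif]
  rw [← Fintype.piFinset_univ,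
    ← Finset.prod_univ_sum (fun _ : Fin d => (Finset.univ : Finset (Equiv.Perm (Fin N))))
      (fun i π => ENNReal.ofReal (fcl ((π j0 : ℕ)) ((N:ℝ) * q i)))]
  have hcard : ((Fintype.card (Fin d → Equiv.Perm (Fin N)) : ENNReal))⁻¹
      = ∏ _i : Fin d, (N.factorial : ENNReal)⁻¹ := by
    rw [Fintype.card_pi, Finset.prod_const, Finset.card_univ, Fintype.card_fin,
      Fintype.card_perm, Fintype.card_fin, Nat.cast_pow, ENNReal.inv_pow,
      Finset.prod_const, Finset.card_univ, Fintype.card_fin]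
  rw [hcard, ← Finset.prod_mul_distrib]

end Main
section Assemble
open MeasureTheory Finset

lemma cast_np2 (n : ℕ) : (((n+2 : ℕ)) : ℝ) = (n:ℝ) + 2 := by push_cast; ring

lemma coord_single (n : ℕ) (j : Fin (n+2)) (q : ℝ) (hq : q ∈ Set.Ico (0:ℝ) 1) :
    (((n+2).factorial : ENNReal))⁻¹ * ∑ π : Equiv.Perm (Fin (n+2)),
      ENNReal.ofReal (fcl ((π j : ℕ)) (((n+2:ℕ):ℝ) * q)) = ENNReal.ofReal (1 - q) := by
  rw [← ENNReal.ofReal_sum_of_nonneg (fun π _ => fcl_nonneg _ _)]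
  rw [cast_np2]
  rw [key_single n j q hq]
  rw [ENNReal.ofReal_mul (by positivity), ENNReal.ofReal_natCast, ← mul_assoc,
    ENNReal.inv_mul_cancel (by exact_mod_cast (Nat.factorial_pos (n+2)).ne')
      (ENNReal.natCast_ne_top _), one_mul]

lemma coord_pair (n : ℕ) (j0 j1 : Fin (n+2)) (h0 : j0 = 0) (h1 : j1 = 1)
    (q r : ℝ) (hq : q ∈ Set.Ico (0:ℝ) 1) (hr : r ∈ Set.Ico (0:ℝ) 1) :
    (((n+2).factorial : ENNReal))⁻¹ * ∑ π : Equiv.Perm (Fin (n+2)),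
      (ENNReal.ofReal (fcl ((π j0 : ℕ)) (((n+2:ℕ):ℝ) * q)) *
        ENNReal.ofReal (fcl ((π j1 : ℕ)) (((n+2:ℕ):ℝ) * r)))
      ≤ ENNReal.ofReal ((1 - q) * (1 - r)) := by
  subst h0 h1
  have hterm : ∀ π : Equiv.Perm (Fin (n+2)),
      ENNReal.ofReal (fcl ((π 0 : ℕ)) (((n+2:ℕ):ℝ) * q)) *
        ENNReal.ofReal (fcl ((π 1 : ℕ)) (((n+2:ℕ):ℝ) * r))
      = ENNReal.ofReal (fcl ((π 0 : ℕ)) (((n:ℝ)+2) * q) * fcl ((π 1 : ℕ)) (((n:ℝ)+2) * r)) := by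
    intro π
    rw [ENNReal.ofReal_mul (fcl_nonneg _ _), cast_np2]
  simp only [hterm]
  rw [← ENNReal.ofReal_sum_of_nonneg
    (fun π _ => mul_nonneg (fcl_nonneg _ _) (fcl_nonneg _ _))]
  have hkey := key_pair n q r hq hr
  calc (((n+2).factorial : ENNReal))⁻¹ * ENNReal.ofReal
        (∑ π : Equiv.Perm (Fin (n+2)), fcl ((π 0 : ℕ)) (((n:ℝ)+2) * q) * fcl ((π 1 : ℕ)) (((n:ℝ)+2) * r))
      ≤ (((n+2).factorial : ENNReal))⁻¹ *
          ENNReal.ofReal (((n+2).factorial : ℝ) * ((1 - q) * (1 - r))) := by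
        gcongr
    _ = ENNReal.ofReal ((1 - q) * (1 - r)) := by
        rw [ENNReal.ofReal_mul (by positivity), ENNReal.ofReal_natCast, ← mul_assoc,
          ENNReal.inv_mul_cancel (by exact_mod_cast (Nat.factorial_pos (n+2)).ne')
            (ENNReal.natCast_ne_top _), one_mul]

end Assemble

/-- Latin hypercube sampling in `[0,1)^d` is pairwise negatively dependent: for any anchored
boxes `Q = ∏_i [q^{(i)},1)` and `R = ∏_i [r^{(i)},1)`,
`P(p_1 ∈ Q, p_2 ∈ R) ≤ ∏_i (1-q^{(i)})(1-r^{(i)}) = P(p_1 ∈ Q)·P(p_2 ∈ R)`. -/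
theorem lhs_pairwise_negatively_dependent (N d : ℕ) (hN : 2 ≤ N)
    (q r : Fin d → ℝ) (hq : ∀ i, q i ∈ Set.Ico (0 : ℝ) 1) (hr : ∀ i, r i ∈ Set.Ico (0 : ℝ) 1) :
    lhsMeasure N d {ω | (∀ i, lhsPoint N d ⟨0, by omega⟩ i ω ∈ Set.Ico (q i) 1) ∧
        (∀ i, lhsPoint N d ⟨1, by omega⟩ i ω ∈ Set.Ico (r i) 1)}
      ≤ ENNReal.ofReal (∏ i, (1 - q i) * (1 - r i)) ∧
    ENNReal.ofReal (∏ i, (1 - q i) * (1 - r i))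
      = lhsMeasure N d {ω | ∀ i, lhsPoint N d ⟨0, by omega⟩ i ω ∈ Set.Ico (q i) 1} *
        lhsMeasure N d {ω | ∀ i, lhsPoint N d ⟨1, by omega⟩ i ω ∈ Set.Ico (r i) 1} := by
  obtain ⟨n, rfl⟩ : ∃ n, N = n + 2 := ⟨N - 2, by omega⟩
  have e0 : (⟨0, by omega⟩ : Fin (n + 2)) = (0 : Fin (n + 2)) := by
    apply Fin.ext; simp
  have e1 : (⟨1, by omega⟩ : Fin (n + 2)) = (1 : Fin (n + 2)) := by
    apply Fin.ext; simp
  have hj : (⟨0, by omega⟩ : Fin (n + 2)) ≠ (⟨1, by omega⟩ : Fin (n + 2)) := by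
    simp [Fin.ext_iff]
  have hnn : ∀ i, (0:ℝ) ≤ (1 - q i) * (1 - r i) := fun i =>
    mul_nonneg (by linarith [(hq i).2]) (by linarith [(hr i).2])
  constructor
  · rw [measure_pair (n+2) d ⟨0, by omega⟩ ⟨1, by omega⟩ hj q r hq hr]
    rw [ENNReal.ofReal_prod_of_nonneg (fun i _ => hnn i)]
    apply Finset.prod_le_prod' 
    intro i _
    exact coord_pair n ⟨0, by omega⟩ ⟨1, by omega⟩ e0 e1 (q i) (r i) (hq i) (hr i)
  · rw [measure_single (n+2) d ⟨0, by omega⟩ q hq, measure_single (n+2) d ⟨1, by omega⟩ r hr]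
    rw [Finset.prod_congr rfl (fun i _ => coord_single n _ (q i) (hq i)),
      Finset.prod_congr rfl (fun i _ => coord_single n _ (r i) (hr i))]
    rw [← Finset.prod_mul_distrib]
    rw [ENNReal.ofReal_prod_of_nonneg (fun i _ => hnn i)]
    refine Finset.prod_congr rfl fun i _ => ?_
    rw [ENNReal.ofReal_mul (by linarith [(hq i).2])]
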